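/- arXiv:1702.06770 — 3 statements merged into one kernel-verified Lean document; each statement's English description precedes it below -/
import Mathlib

section
/- Let u(x,t) = ∫₀ᵗ ∫_{|x−t+τ|}^{x+t−τ} F(ξ,τ) dξ dτ with F continuous on [0,L]×[0,T] and F(0,0)=0. Then u_x and u_t extend continuously across the diagonal x = t; that is, u ∈ C¹([0,L]×[0,T]). -/
/-!
Write `F = (F - c) + c` with `c τ = F 0 τ`. The odd reflection of `F - c` in `ξ` is continuous,
since `F - c` vanishes at `ξ = 0`; its primitive `G(w, τ)` is therefore `C¹` in `w`, and even.
Evenness turns the integral of `F - c` over `[|x - t + τ|, x + t - τ]` into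
`G(x + t - τ, τ) - G(t - x - τ, τ)`, and `(r, y) ↦ ∫₀ʳ G(y - τ, τ) dτ` has continuous partial
derivatives. The part `c` contributes `∫₀ᵗ c(τ) (x + t - τ - |x - t + τ|) dτ = 2 (H t - H (t - x))`
with `H` the primitive of the continuous function `s ↦ ∫₀^{max s 0} c`, so the kink of
`|x - t + τ|` across the diagonal `x = t` disappears after integration.
-/

open Set intervalIntegral MeasureTheory Function

section ParametricIntegral

variable {E : Type*} [NormedAddCommGroup E] [NormedSpace ℝ E]

theorem contDiff_one_uncurry_of_hasDerivAt {f f₁ f₂ : ℝ → ℝ → E}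
    (h₁ : ∀ x y, HasDerivAt (f · y) (f₁ x y) x) (h₂ : ∀ x y, HasDerivAt (f x ·) (f₂ x y) y)
    (c₁ : Continuous ↿f₁) (c₂ : Continuous ↿f₂) : ContDiff ℝ 1 ↿f := by
  have d₁ : Continuous ↿fun x y => (1 : ℝ →L[ℝ] ℝ).smulRight (f₁ x y) := by fun_prop
  have d₂ : Continuous ↿fun x y => (1 : ℝ →L[ℝ] ℝ).smulRight (f₂ x y) := by fun_prop
  exact contDiff_one_iff_hasFDerivAt.2 ⟨_, by fun_prop, fun p =>
    (hasStrictFDerivAt_uncurry_coprod (.of_forall fun v => (h₁ v.1 v.2).hasFDerivAt)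
      (.of_forall fun v => (h₂ v.1 v.2).hasFDerivAt) d₁.continuousAt d₂.continuousAt).hasFDerivAt⟩

theorem hasDerivAt_intervalIntegral_of_hasDerivAt_param {g g' : ℝ → ℝ → E}
    (hg : Continuous ↿g) (hg' : Continuous ↿g') (h : ∀ y τ, HasDerivAt (g · τ) (g' y τ) y)
    (a b y₀ : ℝ) :
    HasDerivAt (fun y => ∫ τ in a..b, g y τ) (∫ τ in a..b, g' y₀ τ) y₀ := by
  obtain ⟨M, hM⟩ :=
    (isCompact_closedBall y₀ 1 |>.prod isCompact_uIcc).exists_bound_of_continuousOn hg'.continuousOn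
  refine (hasDerivAt_integral_of_dominated_loc_of_deriv_le (bound := fun _ => M)
    (Metric.ball_mem_nhds y₀ one_pos) (.of_forall fun y => (hg.uncurry_left y).aestronglyMeasurable)
    ((hg.uncurry_left y₀).intervalIntegrable a b) (hg'.uncurry_left y₀).aestronglyMeasurable
    (ae_of_all _ fun τ hτ y hy => hM (y, τ) ⟨Metric.ball_subset_closedBall hy, uIoc_subset_uIcc hτ⟩)
    intervalIntegrable_const (ae_of_all _ fun τ _ y _ => h y τ)).2

theorem integral_zero_neg_of_odd {f : ℝ → E} (hf : ∀ x, f (-x) = -f x) (a : ℝ) :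
    ∫ x in 0..-a, f x = ∫ x in 0..a, f x := by
  have h := integral_comp_neg (a := 0) (b := a) f
  simp only [hf, intervalIntegral.integral_neg, neg_zero] at h
  rw [integral_symm, ← h, neg_neg]

variable [CompleteSpace E]

theorem contDiff_one_uncurry_intervalIntegral_param {g g' : ℝ → ℝ → E}
    (hg : Continuous ↿g) (hg' : Continuous ↿g') (h : ∀ y τ, HasDerivAt (g · τ) (g' y τ) y)
    (a : ℝ) : ContDiff ℝ 1 ↿(fun r y => ∫ τ in a..r, g y τ) :=
  contDiff_one_uncurry_of_hasDerivAt (f₁ := fun r y => g y r)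
    (f₂ := fun r y => ∫ τ in a..r, g' y τ)
    (fun r y => ((hg.uncurry_left y).integral_hasStrictDerivAt a r).hasDerivAt)
    (fun r y => hasDerivAt_intervalIntegral_of_hasDerivAt_param hg hg' h a r y)
    (hg.comp continuous_swap)
    (continuous_parametric_intervalIntegral_of_continuous (f := fun (p : ℝ × ℝ) τ => g' p.2 τ)
      (hg'.comp (continuous_fst.snd.prodMk continuous_snd)) continuous_fst)

theorem contDiff_one_intervalIntegral {k : ℝ → E} (hk : Continuous k) (a : ℝ) :
    ContDiff ℝ 1 (fun s => ∫ σ in a..s, k σ) := by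
  rw [contDiff_one_iff_deriv, funext (hk.deriv_integral k a)]
  exact ⟨fun s => (hk.integral_hasStrictDerivAt a s).hasDerivAt.differentiableAt, hk⟩

end ParametricIntegral

theorem integral_sub_mul_eq_integral_integral {c : ℝ → ℝ} (hc : Continuous c) (a s : ℝ) :
    ∫ τ in a..s, (s - τ) * c τ = ∫ σ in a..s, ∫ τ in a..σ, c τ := by
  have := integral_mul_deriv_eq_deriv_mul (a := a) (b := s) (u := fun τ => s - τ)
    (u' := fun _ => -1) (v := fun σ => ∫ τ in a..σ, c τ) (v' := c)
    (fun τ _ => (hasDerivAt_id τ).const_sub s |>.congr_deriv (by simp))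
    (fun σ _ => (hc.integral_hasStrictDerivAt a σ).hasDerivAt)
    intervalIntegrable_const (hc.intervalIntegrable a s)
  simpa using this

theorem integral_mul_max_sub {c : ℝ → ℝ} (hc : Continuous c) {s t : ℝ} (ht : 0 ≤ t)
    (hst : s ≤ t) :
    ∫ τ in 0..t, c τ * max (s - τ) 0 = ∫ σ in 0..s, ∫ τ in 0..max σ 0, c τ := by
  rcases le_total s 0 with hs | hs
  · have lhs : ∀ τ ∈ uIcc 0 t, c τ * max (s - τ) 0 = 0 := fun τ hτ => by
      rw [uIcc_of_le ht] at hτ; simp [max_eq_right (by linarith [hτ.1] : s - τ ≤ 0)]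
    have rhs : ∀ σ ∈ uIcc 0 s, ∫ τ in 0..max σ 0, c τ = 0 := fun σ hσ => by
      rw [uIcc_of_ge hs] at hσ; simp [max_eq_right hσ.2]
    rw [integral_congr lhs, integral_congr rhs]; simp
  · have hcont : Continuous fun τ => c τ * max (s - τ) 0 := by fun_prop
    have tail : ∀ τ ∈ uIcc s t, c τ * max (s - τ) 0 = 0 := fun τ hτ => by
      rw [uIcc_of_le hst] at hτ; simp [max_eq_right (by linarith [hτ.1] : s - τ ≤ 0)]
    have head : ∀ τ ∈ uIcc 0 s, c τ * max (s - τ) 0 = (s - τ) * c τ := fun τ hτ => by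
      rw [uIcc_of_le hs] at hτ; rw [max_eq_left (by linarith [hτ.2]), mul_comm]
    have rhs : ∀ σ ∈ uIcc 0 s, ∫ τ in 0..max σ 0, c τ = ∫ τ in 0..σ, c τ := fun σ hσ => by
      rw [uIcc_of_le hs] at hσ; rw [max_eq_left hσ.1]
    rw [← integral_add_adjacent_intervals (hcont.intervalIntegrable 0 s)
      (hcont.intervalIntegrable s t), integral_congr tail, integral_congr head,
      integral_congr rhs, integral_sub_mul_eq_integral_integral hc]
    simp

noncomputable section

variable {F : ℝ → ℝ → ℝ}

def oddReflection (F : ℝ → ℝ → ℝ) (ξ τ : ℝ) : ℝ :=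
  if 0 ≤ ξ then F ξ τ - F 0 τ else F 0 τ - F (-ξ) τ

def oddPrimitive (F : ℝ → ℝ → ℝ) (w τ : ℝ) : ℝ :=
  ∫ ξ in 0..w, oddReflection F ξ τ

def characteristicIntegral (F : ℝ → ℝ → ℝ) (r y : ℝ) : ℝ :=
  ∫ τ in 0..r, oddPrimitive F (y - τ) τ

def boundaryPrimitive (F : ℝ → ℝ → ℝ) (s : ℝ) : ℝ :=
  ∫ σ in 0..s, ∫ τ in 0..max σ 0, F 0 τ

theorem oddReflection_neg (ξ τ : ℝ) : oddReflection F (-ξ) τ = -oddReflection F ξ τ := by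
  rcases lt_trichotomy ξ 0 with h | rfl | h
  · simp [oddReflection, h.le, not_le.2 h]
  · simp [oddReflection]
  · simp [oddReflection, h.le, not_le.2 (neg_neg_of_pos h)]

theorem oddPrimitive_neg (w τ : ℝ) : oddPrimitive F (-w) τ = oddPrimitive F w τ :=
  integral_zero_neg_of_odd (fun ξ => oddReflection_neg ξ τ) w

theorem oddPrimitive_of_nonneg {w : ℝ} (hw : 0 ≤ w) (τ : ℝ) :
    oddPrimitive F w τ = ∫ ξ in 0..w, (F ξ τ - F 0 τ) :=
  integral_congr fun ξ hξ => if_pos (by rw [uIcc_of_le hw] at hξ; exact hξ.1)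

theorem oddPrimitive_abs (a τ : ℝ) : oddPrimitive F |a| τ = oddPrimitive F a τ := by
  rcases abs_choice a with h | h <;> rw [h]
  exact oddPrimitive_neg a τ

section

variable (hF : Continuous ↿F)
include hF

theorem continuous_oddReflection : Continuous ↿(oddReflection F) := by
  have h₁ : Continuous fun p : ℝ × ℝ => F p.1 p.2 - F 0 p.2 := by fun_prop
  have h₂ : Continuous fun p : ℝ × ℝ => F 0 p.2 - F (-p.1) p.2 := by fun_prop
  exact h₁.if_le h₂ continuous_const continuous_fst fun p hp => by simp [← hp]

theorem continuous_oddPrimitive : Continuous ↿(oddPrimitive F) :=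
  continuous_parametric_intervalIntegral_of_continuous
    (f := fun (p : ℝ × ℝ) ξ => oddReflection F ξ p.2)
    ((continuous_oddReflection hF).comp (continuous_snd.prodMk continuous_fst.snd)) continuous_fst

theorem hasDerivAt_oddPrimitive (w τ : ℝ) :
    HasDerivAt (oddPrimitive F · τ) (oddReflection F w τ) w :=
  ((continuous_oddReflection hF).uncurry_right τ |>.integral_hasStrictDerivAt 0 w).hasDerivAt

theorem contDiff_characteristicIntegral : ContDiff ℝ 1 ↿(characteristicIntegral F) := by
  have hshear : Continuous fun p : ℝ × ℝ => (p.1 - p.2, p.2) := by fun_prop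
  have hg : Continuous fun p : ℝ × ℝ => oddPrimitive F (p.1 - p.2) p.2 :=
    (continuous_oddPrimitive hF).comp hshear
  have hg' : Continuous fun p : ℝ × ℝ => oddReflection F (p.1 - p.2) p.2 :=
    (continuous_oddReflection hF).comp hshear
  have hderiv (y τ : ℝ) :
      HasDerivAt (fun y => oddPrimitive F (y - τ) τ) (oddReflection F (y - τ) τ) y :=
    (hasDerivAt_oddPrimitive hF (y - τ) τ).comp_sub_const y τ
  exact contDiff_one_uncurry_intervalIntegral_param hg hg' hderiv 0

theorem contDiff_boundaryPrimitive : ContDiff ℝ 1 (boundaryPrimitive F) :=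
  have hc : Continuous fun τ => F 0 τ := hF.uncurry_left 0
  contDiff_one_intervalIntegral
    ((contDiff_one_intervalIntegral hc 0).continuous.comp (continuous_id.max continuous_const)) 0

theorem integral_abs_eq_oddPrimitive {a b : ℝ} (hb : 0 ≤ b) (τ : ℝ) :
    ∫ ξ in |a|..b, F ξ τ = oddPrimitive F b τ - oddPrimitive F (-a) τ + (b - |a|) * F 0 τ := by
  have hc : Continuous fun ξ => F ξ τ := hF.uncurry_right τ
  rw [oddPrimitive_neg, ← oddPrimitive_abs a, oddPrimitive_of_nonneg hb,
    oddPrimitive_of_nonneg (abs_nonneg a), integral_sub (hc.intervalIntegrable _ _)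
      intervalIntegrable_const, integral_sub (hc.intervalIntegrable _ _) intervalIntegrable_const,
    ← integral_interval_sub_left (hc.intervalIntegrable 0 b) (hc.intervalIntegrable 0 |a|)]
  simp only [intervalIntegral.integral_const, smul_eq_mul]
  ring

theorem duhamel_integral_eq {x t : ℝ} (hx : 0 ≤ x) (ht : 0 ≤ t) :
    ∫ τ in 0..t, ∫ ξ in |x - t + τ|..(x + t - τ), F ξ τ =
      characteristicIntegral F t (x + t) - characteristicIntegral F t (t - x) +
        2 * (boundaryPrimitive F t - boundaryPrimitive F (t - x)) := by
  have hslice : ∀ τ ∈ uIcc 0 t, ∫ ξ in |x - t + τ|..(x + t - τ), F ξ τ =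
      (oddPrimitive F (x + t - τ) τ - oddPrimitive F (t - x - τ) τ) +
        2 * (F 0 τ * max (t - τ) 0 - F 0 τ * max (t - x - τ) 0) := fun τ hτ => by
    rw [uIcc_of_le ht] at hτ
    rw [integral_abs_eq_oddPrimitive hF (by linarith [hτ.2]),
      show -(x - t + τ) = t - x - τ by ring, max_eq_left (sub_nonneg.2 hτ.2)]
    rcases le_total 0 (x - t + τ) with h | h
    · rw [abs_of_nonneg h, max_eq_right (by linarith)]; ring
    · rw [abs_of_nonpos h, max_eq_left (by linarith)]; ring
  have hc : Continuous fun τ => F 0 τ := hF.uncurry_left 0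
  have hG (y : ℝ) : IntervalIntegrable (fun τ => oddPrimitive F (y - τ) τ) volume 0 t :=
    have hpath : Continuous fun τ : ℝ => (y - τ, τ) := by fun_prop
    ((continuous_oddPrimitive hF).comp hpath).intervalIntegrable _ _
  have hR (s : ℝ) : IntervalIntegrable (fun τ => F 0 τ * max (s - τ) 0) volume 0 t :=
    (hc.mul (by fun_prop)).intervalIntegrable _ _
  rw [integral_congr hslice, integral_add ((hG _).sub (hG _)) (((hR _).sub (hR _)).const_mul 2),
    integral_sub (hG _) (hG _), intervalIntegral.integral_const_mul, integral_sub (hR _) (hR _),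
    integral_mul_max_sub hc ht le_rfl, integral_mul_max_sub hc ht (by linarith)]
  rfl

end

end

theorem duhamel_integral_C1_general
    (L T : ℝ)
    (F : ℝ → ℝ → ℝ) (hF : Continuous (Function.uncurry F))
    (u : ℝ → ℝ → ℝ)
    (hu : ∀ x t, u x t = ∫ τ in (0:ℝ)..t, ∫ ξ in |x - t + τ|..(x + t - τ), F ξ τ) :
    ContDiffOn ℝ 1 (Function.uncurry u) (Icc 0 L ×ˢ Icc 0 T) := by
  have hΘ := contDiff_characteristicIntegral hF
  have hH := contDiff_boundaryPrimitive hF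
  have hΦ : ContDiff ℝ 1 fun p : ℝ × ℝ =>
      characteristicIntegral F p.2 (p.1 + p.2) - characteristicIntegral F p.2 (p.2 - p.1) +
        2 * (boundaryPrimitive F p.2 - boundaryPrimitive F (p.2 - p.1)) :=
    ((hΘ.comp (contDiff_snd.prodMk (contDiff_fst.add contDiff_snd))).sub
      (hΘ.comp (contDiff_snd.prodMk (contDiff_snd.sub contDiff_fst)))).add
      (contDiff_const.mul ((hH.comp contDiff_snd).sub (hH.comp (contDiff_snd.sub contDiff_fst))))
  refine hΦ.contDiffOn.congr fun p hp => ?_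
  rw [uncurry_apply_pair, hu]
  exact duhamel_integral_eq hF hp.1.1 hp.2.1

/-- If `F` is continuous with `F(0,0) = 0`, then the Duhamel integral
`u(x,t) = ∫₀ᵗ∫_{|x-t+τ|}^{x+t-τ} F(ξ,τ) dξ dτ` is of class `C¹` on
`[0,L]×[0,T]` (the derivatives extend continuously across the diagonal `x = t`). -/
theorem duhamel_integral_C1
    (L T : ℝ) (hL : 0 < L) (hT : 0 < T)
    (F : ℝ → ℝ → ℝ) (hF : Continuous (Function.uncurry F)) (hF00 : F 0 0 = 0)
    (u : ℝ → ℝ → ℝ)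
    (hu : ∀ x t, u x t = ∫ τ in (0:ℝ)..t, ∫ ξ in |x - t + τ|..(x + t - τ), F ξ τ) :
    ContDiffOn ℝ 1 (Function.uncurry u) (Icc 0 L ×ˢ Icc 0 T) :=
  duhamel_integral_C1_general L T F hF u hu
end

section
/- Let w^f and w^g be C² solutions on [0,L]×[0,T] of w_{tt} = w_{xx} + q(x) w with zero initial data, boundary conditions w^f(0,t) = f(t), w^f(L,t) = 0 (resp. g for w^g), and let y^f(t) = w^f_x(0,t), y^g(t) = w^g_x(0,t). Define H(s,t) = ∫₀ᴸ w^f(x,t) w^g(x,s) dx. Then H_{tt}(s,t) − H_{ss}(s,t) = f(t) y^g(s) − y^f(t) g(s). -/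
/-!
Differentiating under the integral sign, `H_tt(s,t) - H_ss(s,t)` is the integral over `[0, L]`
of `∂ₜ²w^f(x,t) w^g(x,s) - w^f(x,t) ∂ₛ²w^g(x,s)`. By the wave equation the potential terms
cancel, leaving `w^f_xx w^g - w^f w^g_xx`, which is the `x`-derivative of
`w^f_x w^g - w^f w^g_x`. This vanishes at `x = L` and equals `y^f(t) g(s) - f(t) y^g(s)` at `x = 0`.
-/

open Set intervalIntegral Function

section
variable {E : Type*} [NormedAddCommGroup E] [NormedSpace ℝ E]

theorem hasDerivAt_uncurry_right {F : ℝ → ℝ → E} {x t : ℝ}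
    (hF : DifferentiableAt ℝ (uncurry F) (x, t)) :
    HasDerivAt (F x) (fderiv ℝ (uncurry F) (x, t) (0, 1)) t :=
  hF.hasFDerivAt.comp_hasDerivAt (f := fun τ => (x, τ)) t
    ((hasDerivAt_const t x).prodMk (hasDerivAt_id t))

theorem ContDiff.uncurry_deriv_right {F : ℝ → ℝ → E} {m n : WithTop ℕ∞}
    (hF : ContDiff ℝ n (uncurry F)) (hmn : m + 1 ≤ n) :
    ContDiff ℝ m (uncurry fun x t => deriv (F x) t) := by
  have hdiff : Differentiable ℝ (uncurry F) :=
    (hF.of_le (le_add_self.trans hmn)).differentiable one_ne_zero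
  have : (uncurry fun x t => deriv (F x) t) = fun p => fderiv ℝ (uncurry F) p (0, 1) :=
    funext fun p => (hasDerivAt_uncurry_right (hdiff p)).deriv
  rw [this]
  exact (hF.fderiv_right hmn).clm_apply contDiff_const

theorem hasDerivAt_intervalIntegral_of_continuous [CompleteSpace E] {F F' : ℝ → ℝ → E}
    {a b : ℝ}
    (hF : Continuous (uncurry F)) (hF' : Continuous (uncurry F'))
    (hd : ∀ x t, HasDerivAt (F x) (F' x t) t) (t₀ : ℝ) :
    HasDerivAt (fun t => ∫ x in a..b, F x t) (∫ x in a..b, F' x t₀) t₀ := by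
  obtain ⟨C, hC⟩ := (isCompact_uIcc (a := a) (b := b)).prod (isCompact_closedBall t₀ 1)
    |>.exists_bound_of_continuousOn hF'.continuousOn
  refine (hasDerivAt_integral_of_dominated_loc_of_deriv_le (bound := fun _ => C)
    (F := fun t x => F x t) (Metric.closedBall_mem_nhds t₀ one_pos)
    (Filter.Eventually.of_forall fun t => (hF.uncurry_right t).aestronglyMeasurable)
    ((hF.uncurry_right t₀).intervalIntegrable a b) (hF'.uncurry_right t₀).aestronglyMeasurable
    (MeasureTheory.ae_of_all _ fun x hx t ht => hC (x, t) ⟨uIoc_subset_uIcc hx, ht⟩)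
    intervalIntegrable_const
    (MeasureTheory.ae_of_all _ fun x _ t _ => hd x t)).2

end

theorem deriv_intervalIntegral_mul {F : ℝ → ℝ → ℝ} {c : ℝ → ℝ} {a b : ℝ}
    (hF : ContDiff ℝ 1 (uncurry F)) (hc : Continuous c) :
    deriv (fun t => ∫ x in a..b, F x t * c x) = fun t => ∫ x in a..b, deriv (F x) t * c x := by
  have hdiff := hF.differentiable one_ne_zero
  funext t
  exact (hasDerivAt_intervalIntegral_of_continuous (F := fun x t => F x t * c x)
    (F' := fun x t => deriv (F x) t * c x)
    (hF.continuous.mul (hc.comp continuous_fst))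
    ((hF.uncurry_deriv_right (zero_add 1).le).continuous.mul (hc.comp continuous_fst))
    (fun x τ => (hasDerivAt_uncurry_right (hdiff (x, τ))).differentiableAt.hasDerivAt.mul_const _)
    t).deriv

theorem deriv_deriv_intervalIntegral_mul {F : ℝ → ℝ → ℝ} {c : ℝ → ℝ} {a b : ℝ}
    (hF : ContDiff ℝ 2 (uncurry F)) (hc : Continuous c) (t : ℝ) :
    deriv (deriv fun t => ∫ x in a..b, F x t * c x) t =
      ∫ x in a..b, deriv (deriv (F x)) t * c x := by
  rw [deriv_intervalIntegral_mul (hF.of_le one_le_two) hc,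
    deriv_intervalIntegral_mul (F := fun x t => deriv (F x) t)
      (hF.uncurry_deriv_right one_add_one_eq_two.le) hc]

theorem integral_deriv_deriv_mul_sub_mul_deriv_deriv {u v : ℝ → ℝ} {a b : ℝ}
    (hu : ContDiff ℝ 2 u) (hv : ContDiff ℝ 2 v) :
    ∫ x in a..b, (deriv (deriv u) x * v x - u x * deriv (deriv v) x) =
      (deriv u b * v b - u b * deriv v b) - (deriv u a * v a - u a * deriv v a) := by
  obtain ⟨hu₁, -, hu'⟩ := (contDiff_succ_iff_deriv (n := 1)).1 hu
  obtain ⟨hv₁, -, hv'⟩ := (contDiff_succ_iff_deriv (n := 1)).1 hv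
  have hu'₁ := hu'.differentiable one_ne_zero
  have hv'₁ := hv'.differentiable one_ne_zero
  have hu'' := hu'.continuous_deriv le_rfl
  have hv'' := hv'.continuous_deriv le_rfl
  have hu₀ := hu.continuous
  have hv₀ := hv.continuous
  refine integral_eq_sub_of_hasDerivAt (f := fun x => deriv u x * v x - u x * deriv v x)
    (fun x _ => ?_) (Continuous.intervalIntegrable (by fun_prop) _ _)
  convert ((hu'₁ x).hasDerivAt.fun_mul (hv₁ x).hasDerivAt).fun_sub
    ((hu₁ x).hasDerivAt.fun_mul (hv'₁ x).hasDerivAt) using 1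
  ring

theorem blagoveshchenskii_wave_general
    (L T : ℝ) (hL : 0 < L)
    (q f g yf yg : ℝ → ℝ)
    (wf wg : ℝ → ℝ → ℝ)
    (hwf : ContDiff ℝ 2 (Function.uncurry wf))
    (hwg : ContDiff ℝ 2 (Function.uncurry wg))
    (heqf : ∀ x ∈ Icc 0 L, ∀ t ∈ Icc 0 T,
      deriv (fun τ' => deriv (fun τ => wf x τ) τ') t =
        deriv (fun y => deriv (fun z => wf z t) y) x + q x * wf x t)
    (heqg : ∀ x ∈ Icc 0 L, ∀ t ∈ Icc 0 T,
      deriv (fun τ' => deriv (fun τ => wg x τ) τ') t =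
        deriv (fun y => deriv (fun z => wg z t) y) x + q x * wg x t)
    (hbdf : ∀ t ∈ Icc 0 T, wf 0 t = f t ∧ wf L t = 0)
    (hbdg : ∀ t ∈ Icc 0 T, wg 0 t = g t ∧ wg L t = 0)
    (hyf : ∀ t ∈ Icc 0 T, yf t = deriv (fun y => wf y t) 0)
    (hyg : ∀ t ∈ Icc 0 T, yg t = deriv (fun y => wg y t) 0)
    (H : ℝ → ℝ → ℝ) (hH : ∀ s t, H s t = ∫ x in (0:ℝ)..L, wf x t * wg x s) :
    ∀ s ∈ Icc (0:ℝ) T, ∀ t ∈ Icc (0:ℝ) T,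
      deriv (fun τ' => deriv (fun τ => H s τ) τ') t
        - deriv (fun σ' => deriv (fun σ => H σ t) σ') s
        = f t * yg s - yf t * g s := by
  intro s hs t ht
  have slice {w : ℝ → ℝ → ℝ} (hw : ContDiff ℝ 2 (uncurry w)) (τ : ℝ) :
      ContDiff ℝ 2 fun x => w x τ :=
    hw.comp (contDiff_id.prodMk contDiff_const)
  have hwf'' := ((hwf.uncurry_deriv_right one_add_one_eq_two.le).uncurry_deriv_right
    (zero_add 1).le).continuous.uncurry_right t
  have hwg'' := ((hwg.uncurry_deriv_right one_add_one_eq_two.le).uncurry_deriv_right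
    (zero_add 1).le).continuous.uncurry_right s
  have hwf₀ := (slice hwf t).continuous
  have hwg₀ := (slice hwg s).continuous
  have hHt : (fun τ => H s τ) = fun τ => ∫ x in (0:ℝ)..L, wf x τ * wg x s := funext (hH s)
  have hHs : (fun σ => H σ t) = fun σ => ∫ x in (0:ℝ)..L, wg x σ * wf x t :=
    funext fun σ => by simp only [hH, mul_comm]
  calc _ = ∫ x in (0:ℝ)..L,
          (deriv (deriv (wf x)) t * wg x s - wf x t * deriv (deriv (wg x)) s) := by
        rw [hHt, hHs, deriv_deriv_intervalIntegral_mul hwf hwg₀,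
          deriv_deriv_intervalIntegral_mul hwg hwf₀, ← integral_sub]
        · simp only [mul_comm]
        all_goals exact Continuous.intervalIntegrable (by fun_prop) _ _
    _ = ∫ x in (0:ℝ)..L,
          (deriv (deriv (wf · t)) x * wg x s - wf x t * deriv (deriv (wg · s)) x) := by
        refine integral_congr fun x hx => ?_
        rw [uIcc_of_le hL.le] at hx
        simp only [heqf x hx t ht, heqg x hx s hs]
        ring
    _ = f t * yg s - yf t * g s := by
        rw [integral_deriv_deriv_mul_sub_mul_deriv_deriv (slice hwf t) (slice hwg s),
          (hbdf t ht).1, (hbdf t ht).2, (hbdg s hs).1, (hbdg s hs).2, hyf t ht, hyg s hs]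
        ring

/-- Blagoveshchenskii's identity for the wave equation with potential:
`H(s,t) = ∫₀ᴸ w^f(x,t) w^g(x,s) dx` satisfies
`H_{tt} - H_{ss} = f(t) y^g(s) - y^f(t) g(s)`. -/
theorem blagoveshchenskii_wave
    (L T : ℝ) (hL : 0 < L) (hT : 0 < T)
    (q f g yf yg : ℝ → ℝ) (hq : ContinuousOn q (Icc 0 L))
    (wf wg : ℝ → ℝ → ℝ)
    (hwf : ContDiff ℝ 2 (Function.uncurry wf))
    (hwg : ContDiff ℝ 2 (Function.uncurry wg))
    (heqf : ∀ x ∈ Icc 0 L, ∀ t ∈ Icc 0 T,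
      deriv (fun τ' => deriv (fun τ => wf x τ) τ') t =
        deriv (fun y => deriv (fun z => wf z t) y) x + q x * wf x t)
    (heqg : ∀ x ∈ Icc 0 L, ∀ t ∈ Icc 0 T,
      deriv (fun τ' => deriv (fun τ => wg x τ) τ') t =
        deriv (fun y => deriv (fun z => wg z t) y) x + q x * wg x t)
    (hinitf : ∀ x ∈ Icc 0 L, wf x 0 = 0 ∧ deriv (fun τ => wf x τ) 0 = 0)
    (hinitg : ∀ x ∈ Icc 0 L, wg x 0 = 0 ∧ deriv (fun τ => wg x τ) 0 = 0)
    (hbdf : ∀ t ∈ Icc 0 T, wf 0 t = f t ∧ wf L t = 0)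
    (hbdg : ∀ t ∈ Icc 0 T, wg 0 t = g t ∧ wg L t = 0)
    (hyf : ∀ t ∈ Icc 0 T, yf t = deriv (fun y => wf y t) 0)
    (hyg : ∀ t ∈ Icc 0 T, yg t = deriv (fun y => wg y t) 0)
    (H : ℝ → ℝ → ℝ) (hH : ∀ s t, H s t = ∫ x in (0:ℝ)..L, wf x t * wg x s) :
    ∀ s ∈ Icc (0:ℝ) T, ∀ t ∈ Icc (0:ℝ) T,
      deriv (fun τ' => deriv (fun τ => H s τ) τ') t
        - deriv (fun σ' => deriv (fun σ => H σ t) σ') s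
        = f t * yg s - yf t * g s :=
  blagoveshchenskii_wave_general L T hL q f g yf yg wf wg hwf hwg heqf heqg hbdf hbdg hyf hyg H hH
end

section
/- Let w^f, w^g be smooth solutions of w_t(x,t) = ∫₀ᵗ N(t−r)(w_{xx} + q w)(x,r) dr on [0,L] with w^f(0,t)=f(t), w^f(L,t)=0 (resp. g), and y^f(t)=w^f_x(0,t), y^g(t)=w^g_x(0,t). Define H(s,t) = ∫₀ᴸ w^f(x,t) w^g(x,s) dx and Φ(s,t) = ∫₀ᵗ N(t−r)(f(r) y^g(s) − y^f(r) g(s)) dr. Then ∫₀ˢ N(s−σ) H_t(σ,t) dσ = ∫₀ᵗ N(t−ξ) H_s(s,ξ) dξ + ∫₀ˢ N(s−σ) Φ(σ,t) dσ. -/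
open Set intervalIntegral

section Helpers

open Function MeasureTheory

/-- First partial derivative of a two-variable function. -/
noncomputable def pd1 (F : ℝ → ℝ → ℝ) : ℝ → ℝ → ℝ :=
  fun x t => fderiv ℝ (uncurry F) (x, t) (1, 0)

/-- Second partial derivative of a two-variable function. -/
noncomputable def pd2 (F : ℝ → ℝ → ℝ) : ℝ → ℝ → ℝ :=
  fun x t => fderiv ℝ (uncurry F) (x, t) (0, 1)

lemma hasDerivAt_pd1 {F : ℝ → ℝ → ℝ} (hF : ContDiff ℝ (⊤ : ℕ∞) (uncurry F)) (x t : ℝ) :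
    HasDerivAt (fun z => F z t) (pd1 F x t) x := by
  have h := (hF.differentiable (by simp) (x, t)).hasFDerivAt
  have h2 : HasDerivAt (fun z : ℝ => ((z, t) : ℝ × ℝ)) (1, 0) x :=
    (hasDerivAt_id x).prodMk (hasDerivAt_const x t)
  exact h.comp_hasDerivAt x h2

lemma hasDerivAt_pd2 {F : ℝ → ℝ → ℝ} (hF : ContDiff ℝ (⊤ : ℕ∞) (uncurry F)) (x t : ℝ) :
    HasDerivAt (fun τ => F x τ) (pd2 F x t) t := by
  have h := (hF.differentiable (by simp) (x, t)).hasFDerivAt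
  have h2 : HasDerivAt (fun τ : ℝ => ((x, τ) : ℝ × ℝ)) (0, 1) t :=
    (hasDerivAt_const t x).prodMk (hasDerivAt_id t)
  exact h.comp_hasDerivAt t h2

lemma contDiff_pd1 {F : ℝ → ℝ → ℝ} (hF : ContDiff ℝ (⊤ : ℕ∞) (uncurry F)) :
    ContDiff ℝ (⊤ : ℕ∞) (uncurry (pd1 F)) :=
  (hF.fderiv_right (by simp)).clm_apply contDiff_const

lemma contDiff_pd2 {F : ℝ → ℝ → ℝ} (hF : ContDiff ℝ (⊤ : ℕ∞) (uncurry F)) :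
    ContDiff ℝ (⊤ : ℕ∞) (uncurry (pd2 F)) :=
  (hF.fderiv_right (by simp)).clm_apply contDiff_const

/-- Differentiation under the interval integral sign, for smooth integrands. -/
lemma hasDerivAt_param {F : ℝ → ℝ → ℝ} (hF : ContDiff ℝ (⊤ : ℕ∞) (uncurry F)) (a b t : ℝ) :
    HasDerivAt (fun τ => ∫ x in a..b, F x τ) (∫ x in a..b, pd2 F x t) t := by
  have hc : Continuous (uncurry F) := hF.continuous
  have hc2 : Continuous (uncurry (pd2 F)) := (contDiff_pd2 hF).continuous
  obtain ⟨C, hC⟩ :=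
    (isCompact_uIcc.prod (isCompact_Icc (a := t - 1) (b := t + 1))).exists_bound_of_continuousOn
      hc2.continuousOn
  have key := intervalIntegral.hasDerivAt_integral_of_dominated_loc_of_deriv_le
    (F := fun τ x => F x τ) (F' := fun τ x => pd2 F x τ) (x₀ := t) (a := a) (b := b)
    (μ := volume) (bound := fun _ => C) (s := Metric.ball t 1) (Metric.ball_mem_nhds t one_pos)
    (Filter.Eventually.of_forall fun τ =>
      ((hc.comp (continuous_id.prodMk continuous_const)).aestronglyMeasurable :
        AEStronglyMeasurable (fun x => F x τ) _))
    ((hc.comp (continuous_id.prodMk continuous_const)).intervalIntegrable a b)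
    ((hc2.comp (continuous_id.prodMk continuous_const)).aestronglyMeasurable)
    (ae_of_all _ fun x hx τ hτ => by
      have hx2 : (x, τ) ∈ uIcc a b ×ˢ Icc (t - 1) (t + 1) := by
        refine ⟨uIoc_subset_uIcc hx, ?_⟩
        have := Metric.mem_ball.mp hτ
        rw [Real.dist_eq] at this
        have h := abs_lt.mp this
        constructor <;> linarith [h.1, h.2]
      exact hC _ hx2)
    (intervalIntegrable_const)
    (ae_of_all _ fun x _ τ _ => hasDerivAt_pd2 hF x τ)
  exact key.2

/-- Fubini for double interval integrals of continuous functions. -/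
lemma interval_swap {F : ℝ → ℝ → ℝ} (hF : Continuous (uncurry F)) (a b c d : ℝ) :
    (∫ x in a..b, ∫ y in c..d, F x y) = ∫ y in c..d, ∫ x in a..b, F x y := by
  have hInt : Integrable (uncurry F)
      ((volume.restrict (Set.uIoc a b)).prod (volume.restrict (Set.uIoc c d))) := by
    rw [Measure.prod_restrict]
    exact ((hF.locallyIntegrable (μ := volume)).integrableOn_isCompact
      (isCompact_uIcc.prod isCompact_uIcc)).mono_set
      (Set.prod_mono uIoc_subset_uIcc uIoc_subset_uIcc)
  simp only [intervalIntegral_eq_integral_uIoc, MeasureTheory.integral_smul]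
  rw [MeasureTheory.integral_integral_swap hInt, smul_comm]

end Helpers

/-- Blagoveshchenskii-type identity for the viscoelastic equation with memory:
with `H(s,t) = ∫₀ᴸ w^f(x,t) w^g(x,s) dx` and
`Φ(s,t) = ∫₀ᵗ N(t-r)(f(r) y^g(s) - y^f(r) g(s)) dr` one has
`∫₀ˢ N(s-σ) H_t(σ,t) dσ = ∫₀ᵗ N(t-ξ) H_s(s,ξ) dξ + ∫₀ˢ N(s-σ) Φ(σ,t) dσ`. -/
theorem blagoveshchenskii_memory
    (L T : ℝ) (hL : 0 < L) (hT : 0 < T)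
    (N q f g yf yg : ℝ → ℝ)
    (hN : ContDiff ℝ 3 N) (hN0 : N 0 = 1) (hq : ContinuousOn q (Icc 0 L))
    (wf wg : ℝ → ℝ → ℝ)
    (hwf : ContDiff ℝ (⊤ : ℕ∞) (Function.uncurry wf))
    (hwg : ContDiff ℝ (⊤ : ℕ∞) (Function.uncurry wg))
    (heqf : ∀ x ∈ Icc 0 L, ∀ t ∈ Icc 0 T,
      deriv (fun τ => wf x τ) t =
        ∫ r in (0:ℝ)..t,
          N (t - r) * (deriv (fun y => deriv (fun z => wf z r) y) x + q x * wf x r))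
    (heqg : ∀ x ∈ Icc 0 L, ∀ t ∈ Icc 0 T,
      deriv (fun τ => wg x τ) t =
        ∫ r in (0:ℝ)..t,
          N (t - r) * (deriv (fun y => deriv (fun z => wg z r) y) x + q x * wg x r))
    (hbdf : ∀ t ∈ Icc 0 T, wf 0 t = f t ∧ wf L t = 0)
    (hbdg : ∀ t ∈ Icc 0 T, wg 0 t = g t ∧ wg L t = 0)
    (hyf : ∀ t ∈ Icc 0 T, yf t = deriv (fun y => wf y t) 0)
    (hyg : ∀ t ∈ Icc 0 T, yg t = deriv (fun y => wg y t) 0)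
    (H Φ : ℝ → ℝ → ℝ)
    (hH : ∀ s t, H s t = ∫ x in (0:ℝ)..L, wf x t * wg x s)
    (hΦ : ∀ s t, Φ s t = ∫ r in (0:ℝ)..t, N (t - r) * (f r * yg s - yf r * g s)) :
    ∀ s ∈ Icc (0:ℝ) T, ∀ t ∈ Icc (0:ℝ) T,
      (∫ σ in (0:ℝ)..s, N (s - σ) * deriv (fun τ => H σ τ) t)
        = (∫ ξ in (0:ℝ)..t, N (t - ξ) * deriv (fun σ => H σ ξ) s)
          + ∫ σ in (0:ℝ)..s, N (s - σ) * Φ σ t := by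
  open Function MeasureTheory in
  intro s hs t ht
  -- Tietze extension of the potential
  obtain ⟨Qc, hQc⟩ := ContinuousMap.exists_restrict_eq
    (isClosed_Icc (a := (0:ℝ)) (b := L)) ⟨_, hq.restrict⟩
  set Q : ℝ → ℝ := ⇑Qc with hQdef
  have hQ : Continuous Q := Qc.continuous
  have hQeq : ∀ x ∈ Icc (0:ℝ) L, Q x = q x := by
    intro x hx
    have := congrFun (congrArg DFunLike.coe hQc) ⟨x, hx⟩
    simpa using this
  -- continuity building blocks
  have cN : Continuous N := hN.continuous
  have cwf : Continuous (uncurry wf) := hwf.continuous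
  have cwg : Continuous (uncurry wg) := hwg.continuous
  have cwfxx : Continuous (uncurry (pd1 (pd1 wf))) := (contDiff_pd1 (contDiff_pd1 hwf)).continuous
  have cwgxx : Continuous (uncurry (pd1 (pd1 wg))) := (contDiff_pd1 (contDiff_pd1 hwg)).continuous
  have sl : ∀ (G : ℝ → ℝ → ℝ), Continuous (uncurry G) → ∀ c : ℝ, Continuous fun x => G x c :=
    fun G hG c => hG.comp (continuous_id.prodMk continuous_const)
  have sr : ∀ (G : ℝ → ℝ → ℝ), Continuous (uncurry G) → ∀ c : ℝ, Continuous fun r => G c r :=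
    fun G hG c => hG.comp (continuous_const.prodMk continuous_id)
  -- subset facts
  have hsubt : uIcc (0:ℝ) t ⊆ Icc 0 T := by
    rw [uIcc_of_le ht.1]; exact Icc_subset_Icc le_rfl ht.2
  have hsubs : uIcc (0:ℝ) s ⊆ Icc 0 T := by
    rw [uIcc_of_le hs.1]; exact Icc_subset_Icc le_rfl hs.2
  -- the two "elliptic parts"
  set Ff : ℝ → ℝ → ℝ := fun x r => pd1 (pd1 wf) x r + Q x * wf x r with hFfdef
  set Gg : ℝ → ℝ → ℝ := fun x σ => pd1 (pd1 wg) x σ + Q x * wg x σ with hGgdef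
  have cFf : Continuous (uncurry Ff) := cwfxx.add ((hQ.comp continuous_fst).mul cwf)
  have cGg : Continuous (uncurry Gg) := cwgxx.add ((hQ.comp continuous_fst).mul cwg)
  set A : ℝ → ℝ → ℝ := fun r σ => ∫ x in (0:ℝ)..L, Ff x r * wg x σ with hAdef
  set B : ℝ → ℝ → ℝ := fun ξ σ => ∫ x in (0:ℝ)..L, wf x ξ * Gg x σ with hBdef
  have cB : Continuous (uncurry B) := by
    have h : Continuous (uncurry fun (p : ℝ × ℝ) (x : ℝ) => wf x p.1 * Gg x p.2) :=
      (cwf.comp (continuous_snd.prodMk (continuous_fst.fst))).mul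
        (cGg.comp (continuous_snd.prodMk (continuous_fst.snd)))
    exact intervalIntegral.continuous_parametric_intervalIntegral_of_continuous' h 0 L
  -- derivative identifications
  have pdd_f : ∀ x r : ℝ, deriv (fun y => deriv (fun z => wf z r) y) x = pd1 (pd1 wf) x r := by
    intro x r
    have h1 : (fun y => deriv (fun z => wf z r) y) = fun y => pd1 wf y r :=
      funext fun y => (hasDerivAt_pd1 hwf y r).deriv
    rw [h1]; exact (hasDerivAt_pd1 (contDiff_pd1 hwf) x r).deriv
  have pdd_g : ∀ x σ : ℝ, deriv (fun y => deriv (fun z => wg z σ) y) x = pd1 (pd1 wg) x σ := by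
    intro x σ
    have h1 : (fun y => deriv (fun z => wg z σ) y) = fun y => pd1 wg y σ :=
      funext fun y => (hasDerivAt_pd1 hwg y σ).deriv
    rw [h1]; exact (hasDerivAt_pd1 (contDiff_pd1 hwg) x σ).deriv
  -- the PDE, in pd form
  have heqf' : ∀ x ∈ Icc (0:ℝ) L, ∀ t' ∈ Icc (0:ℝ) T,
      pd2 wf x t' = ∫ r in (0:ℝ)..t', N (t' - r) * Ff x r := by
    intro x hx t' ht'
    rw [← (hasDerivAt_pd2 hwf x t').deriv, heqf x hx t' ht']
    refine intervalIntegral.integral_congr fun r _ => ?_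
    rw [pdd_f, ← hQeq x hx]
  have heqg' : ∀ x ∈ Icc (0:ℝ) L, ∀ t' ∈ Icc (0:ℝ) T,
      pd2 wg x t' = ∫ r in (0:ℝ)..t', N (t' - r) * Gg x r := by
    intro x hx t' ht'
    rw [← (hasDerivAt_pd2 hwg x t').deriv, heqg x hx t' ht']
    refine intervalIntegral.integral_congr fun r _ => ?_
    rw [pdd_g, ← hQeq x hx]
  -- boundary values in pd form
  have hyf' : ∀ r ∈ Icc (0:ℝ) T, yf r = pd1 wf 0 r := fun r hr => by
    rw [hyf r hr]; exact (hasDerivAt_pd1 hwf 0 r).deriv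
  have hyg' : ∀ σ ∈ Icc (0:ℝ) T, yg σ = pd1 wg 0 σ := fun σ hσ => by
    rw [hyg σ hσ]; exact (hasDerivAt_pd1 hwg 0 σ).deriv
  -- Step A : time derivative of H
  have stepA : ∀ σ : ℝ, ∀ t' ∈ Icc (0:ℝ) T,
      deriv (fun τ => H σ τ) t' = ∫ r in (0:ℝ)..t', N (t' - r) * A r σ := by
    intro σ t' ht'
    have hFσ : ContDiff ℝ (⊤ : ℕ∞) (uncurry fun (x τ : ℝ) => wf x τ * wg x σ) :=
      hwf.mul (hwg.comp (contDiff_fst.prodMk contDiff_const))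
    have h0 : (fun τ => H σ τ) = fun τ => ∫ x in (0:ℝ)..L, wf x τ * wg x σ :=
      funext fun τ => hH σ τ
    have h1 : deriv (fun τ => H σ τ) t'
        = ∫ x in (0:ℝ)..L, pd2 (fun x τ => wf x τ * wg x σ) x t' := by
      rw [h0]; exact (hasDerivAt_param hFσ 0 L t').deriv
    have h2 : ∀ x : ℝ, pd2 (fun x τ => wf x τ * wg x σ) x t' = pd2 wf x t' * wg x σ :=
      fun x => (hasDerivAt_pd2 hFσ x t').unique ((hasDerivAt_pd2 hwf x t').mul_const _)
    calc deriv (fun τ => H σ τ) t'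
        = ∫ x in (0:ℝ)..L, (∫ r in (0:ℝ)..t', N (t' - r) * Ff x r) * wg x σ := by
          rw [h1]
          refine intervalIntegral.integral_congr fun x hx => ?_
          rw [h2 x, heqf' x (by rwa [uIcc_of_le hL.le] at hx) t' ht']
      _ = ∫ x in (0:ℝ)..L, ∫ r in (0:ℝ)..t', N (t' - r) * (Ff x r * wg x σ) := by
          refine intervalIntegral.integral_congr fun x _ => ?_
          rw [← intervalIntegral.integral_mul_const]
          exact intervalIntegral.integral_congr fun r _ => by ring
      _ = ∫ r in (0:ℝ)..t', ∫ x in (0:ℝ)..L, N (t' - r) * (Ff x r * wg x σ) := by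
          exact interval_swap (F := fun x r => N (t' - r) * (Ff x r * wg x σ))
            ((cN.comp (continuous_const.sub continuous_snd)).mul
              (cFf.mul (cwg.comp (continuous_fst.prodMk continuous_const)))) 0 L 0 t'
      _ = ∫ r in (0:ℝ)..t', N (t' - r) * A r σ := by
          refine intervalIntegral.integral_congr fun r _ => ?_
          rw [intervalIntegral.integral_const_mul]
  -- Step B : s-derivative of H
  have stepB : ∀ ξ : ℝ, ∀ s' ∈ Icc (0:ℝ) T,
      deriv (fun σ => H σ ξ) s' = ∫ σ in (0:ℝ)..s', N (s' - σ) * B ξ σ := by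
    intro ξ s' hs'
    have hFξ : ContDiff ℝ (⊤ : ℕ∞) (uncurry fun (x σ : ℝ) => wf x ξ * wg x σ) :=
      (hwf.comp (contDiff_fst.prodMk contDiff_const)).mul hwg
    have h0 : (fun σ => H σ ξ) = fun σ => ∫ x in (0:ℝ)..L, wf x ξ * wg x σ :=
      funext fun σ => hH σ ξ
    have h1 : deriv (fun σ => H σ ξ) s'
        = ∫ x in (0:ℝ)..L, pd2 (fun x σ => wf x ξ * wg x σ) x s' := by
      rw [h0]; exact (hasDerivAt_param hFξ 0 L s').deriv
    have h2 : ∀ x : ℝ, pd2 (fun x σ => wf x ξ * wg x σ) x s' = wf x ξ * pd2 wg x s' :=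
      fun x => (hasDerivAt_pd2 hFξ x s').unique ((hasDerivAt_pd2 hwg x s').const_mul _)
    calc deriv (fun σ => H σ ξ) s'
        = ∫ x in (0:ℝ)..L, wf x ξ * ∫ σ in (0:ℝ)..s', N (s' - σ) * Gg x σ := by
          rw [h1]
          refine intervalIntegral.integral_congr fun x hx => ?_
          rw [h2 x, heqg' x (by rwa [uIcc_of_le hL.le] at hx) s' hs']
      _ = ∫ x in (0:ℝ)..L, ∫ σ in (0:ℝ)..s', N (s' - σ) * (wf x ξ * Gg x σ) := by
          refine intervalIntegral.integral_congr fun x _ => ?_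
          rw [← intervalIntegral.integral_const_mul]
          exact intervalIntegral.integral_congr fun σ _ => by ring
      _ = ∫ σ in (0:ℝ)..s', ∫ x in (0:ℝ)..L, N (s' - σ) * (wf x ξ * Gg x σ) := by
          exact interval_swap (F := fun x σ' => N (s' - σ') * (wf x ξ * Gg x σ'))
            ((cN.comp (continuous_const.sub continuous_snd)).mul
              ((cwf.comp (continuous_fst.prodMk continuous_const)).mul cGg)) 0 L 0 s'
      _ = ∫ σ in (0:ℝ)..s', N (s' - σ) * B ξ σ := by
          refine intervalIntegral.integral_congr fun σ _ => ?_
          rw [intervalIntegral.integral_const_mul]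
  -- Step C : integration by parts
  have stepC : ∀ r ∈ Icc (0:ℝ) T, ∀ σ ∈ Icc (0:ℝ) T,
      A r σ = B r σ + (f r * yg σ - yf r * g σ) := by
    intro r hr σ hσ
    have ibp : (∫ x in (0:ℝ)..L,
        (pd1 (pd1 wf) x r * wg x σ - wf x r * pd1 (pd1 wg) x σ))
        = (pd1 wf L r * wg L σ - wf L r * pd1 wg L σ)
          - (pd1 wf 0 r * wg 0 σ - wf 0 r * pd1 wg 0 σ) := by
      apply intervalIntegral.integral_eq_sub_of_hasDerivAt
      · intro x _
        have h := ((hasDerivAt_pd1 (contDiff_pd1 hwf) x r).mul (hasDerivAt_pd1 hwg x σ)).sub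
          ((hasDerivAt_pd1 hwf x r).mul (hasDerivAt_pd1 (contDiff_pd1 hwg) x σ))
        convert h using 1
        · rfl
        · ring
      · exact (((sl _ cwfxx r).mul (sl wg cwg σ)).sub
          ((sl wf cwf r).mul (sl _ cwgxx σ))).intervalIntegrable 0 L
    have hint1 : IntervalIntegrable (fun x => Ff x r * wg x σ) volume 0 L :=
      ((sl Ff cFf r).mul (sl wg cwg σ)).intervalIntegrable 0 L
    have hint2 : IntervalIntegrable (fun x => wf x r * Gg x σ) volume 0 L :=
      ((sl wf cwf r).mul (sl Gg cGg σ)).intervalIntegrable 0 L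
    have hAB : A r σ - B r σ = f r * yg σ - yf r * g σ := by
      have e1 : A r σ - B r σ = ∫ x in (0:ℝ)..L, (Ff x r * wg x σ - wf x r * Gg x σ) := by
        rw [hAdef, hBdef]
        exact (intervalIntegral.integral_sub hint1 hint2).symm
      have e2 : (∫ x in (0:ℝ)..L, (Ff x r * wg x σ - wf x r * Gg x σ))
          = ∫ x in (0:ℝ)..L, (pd1 (pd1 wf) x r * wg x σ - wf x r * pd1 (pd1 wg) x σ) := by
        refine intervalIntegral.integral_congr fun x _ => ?_
        rw [hFfdef, hGgdef]; ring
      rw [e1, e2, ibp, (hbdf r hr).2, (hbdg σ hσ).2, ← (hbdf r hr).1, ← (hbdg σ hσ).1,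
        hyf' r hr, hyg' σ hσ]
      ring
    linarith [hAB]
  -- integrability of the Φ pieces
  have hNf_int : IntervalIntegrable (fun r => N (t - r) * f r) volume 0 t := by
    apply ContinuousOn.intervalIntegrable
    refine ContinuousOn.congr (f := fun r => N (t - r) * wf 0 r)
      (((cN.comp (continuous_const.sub continuous_id)).mul (sr wf cwf 0)).continuousOn) ?_
    intro r hr
    simp only [(hbdf r (hsubt hr)).1]
  have hNyf_int : IntervalIntegrable (fun r => N (t - r) * yf r) volume 0 t := by
    apply ContinuousOn.intervalIntegrable
    refine ContinuousOn.congr (f := fun r => N (t - r) * pd1 wf 0 r)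
      (((cN.comp (continuous_const.sub continuous_id)).mul
        (sr _ (contDiff_pd1 hwf).continuous 0)).continuousOn) ?_
    intro r hr
    simp only [hyf' r (hsubt hr)]
  have hΦsplit : ∀ σ : ℝ, Φ σ t
      = (∫ r in (0:ℝ)..t, N (t - r) * f r) * yg σ
        - (∫ r in (0:ℝ)..t, N (t - r) * yf r) * g σ := by
    intro σ
    rw [hΦ σ t, ← intervalIntegral.integral_mul_const, ← intervalIntegral.integral_mul_const,
      ← intervalIntegral.integral_sub (hNf_int.mul_const _) (hNyf_int.mul_const _)]
    exact intervalIntegral.integral_congr fun r _ => by ring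
  -- inner identity
  have hNB_int : ∀ σ : ℝ, IntervalIntegrable (fun r => N (t - r) * B r σ) volume 0 t :=
    fun σ => ((cN.comp (continuous_const.sub continuous_id)).mul
      (cB.comp (continuous_id.prodMk continuous_const))).intervalIntegrable 0 t
  have hNe_int : ∀ σ : ℝ,
      IntervalIntegrable (fun r => N (t - r) * (f r * yg σ - yf r * g σ)) volume 0 t := by
    intro σ
    apply ContinuousOn.intervalIntegrable
    refine ContinuousOn.congr
      (f := fun r => N (t - r) * (wf 0 r * yg σ - pd1 wf 0 r * g σ))
      (((cN.comp (continuous_const.sub continuous_id)).mul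
        (((sr wf cwf 0).mul continuous_const).sub
          ((sr _ (contDiff_pd1 hwf).continuous 0).mul continuous_const))).continuousOn) ?_
    intro r hr
    simp only [hyf' r (hsubt hr), (hbdf r (hsubt hr)).1]
  have inner_eq : ∀ σ ∈ uIcc (0:ℝ) s,
      (∫ r in (0:ℝ)..t, N (t - r) * A r σ)
        = (∫ r in (0:ℝ)..t, N (t - r) * B r σ) + Φ σ t := by
    intro σ hσ
    have hσT : σ ∈ Icc (0:ℝ) T := hsubs hσ
    have h1 : (∫ r in (0:ℝ)..t, N (t - r) * A r σ)
        = ∫ r in (0:ℝ)..t,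
            (N (t - r) * B r σ + N (t - r) * (f r * yg σ - yf r * g σ)) := by
      refine intervalIntegral.integral_congr fun r hr => ?_
      rw [stepC r (hsubt hr) σ hσT]; ring
    rw [h1, intervalIntegral.integral_add (hNB_int σ) (hNe_int σ), hΦ σ t]
  -- outer integrability
  have hΦc : IntervalIntegrable (fun σ => N (s - σ) * Φ σ t) volume 0 s := by
    apply ContinuousOn.intervalIntegrable
    refine ContinuousOn.congr
      (f := fun σ => N (s - σ) *
        ((∫ r in (0:ℝ)..t, N (t - r) * f r) * pd1 wg 0 σ
          - (∫ r in (0:ℝ)..t, N (t - r) * yf r) * wg 0 σ))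
      (((cN.comp (continuous_const.sub continuous_id)).mul
        ((continuous_const.mul (sr _ (contDiff_pd1 hwg).continuous 0)).sub
          (continuous_const.mul (sr wg cwg 0)))).continuousOn) ?_
    intro σ hσ
    have hσT := hsubs hσ
    simp only [hΦsplit σ, hyg' σ hσT, (hbdg σ hσT).1]
  have hNX_int : IntervalIntegrable
      (fun σ => N (s - σ) * ∫ r in (0:ℝ)..t, N (t - r) * B r σ) volume 0 s := by
    have hX : Continuous fun σ => ∫ r in (0:ℝ)..t, N (t - r) * B r σ := by
      have h : Continuous (uncurry fun (σ r : ℝ) => N (t - r) * B r σ) :=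
        (cN.comp (continuous_const.sub continuous_snd)).mul
          (cB.comp (continuous_snd.prodMk continuous_fst))
      exact intervalIntegral.continuous_parametric_intervalIntegral_of_continuous' h 0 t
    exact ((cN.comp (continuous_const.sub continuous_id)).mul hX).intervalIntegrable 0 s
  -- final computation
  calc (∫ σ in (0:ℝ)..s, N (s - σ) * deriv (fun τ => H σ τ) t)
      = ∫ σ in (0:ℝ)..s,
          (N (s - σ) * (∫ r in (0:ℝ)..t, N (t - r) * B r σ) + N (s - σ) * Φ σ t) := by
        refine intervalIntegral.integral_congr fun σ hσ => ?_
        rw [stepA σ t ht, inner_eq σ hσ, mul_add]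
    _ = (∫ σ in (0:ℝ)..s, N (s - σ) * ∫ r in (0:ℝ)..t, N (t - r) * B r σ)
        + ∫ σ in (0:ℝ)..s, N (s - σ) * Φ σ t :=
        intervalIntegral.integral_add hNX_int hΦc
    _ = (∫ ξ in (0:ℝ)..t, N (t - ξ) * deriv (fun σ => H σ ξ) s)
        + ∫ σ in (0:ℝ)..s, N (s - σ) * Φ σ t := by
        congr 1
        calc (∫ σ in (0:ℝ)..s, N (s - σ) * ∫ r in (0:ℝ)..t, N (t - r) * B r σ)
            = ∫ σ in (0:ℝ)..s, ∫ r in (0:ℝ)..t, N (s - σ) * (N (t - r) * B r σ) := by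
              refine intervalIntegral.integral_congr fun σ _ => ?_
              rw [intervalIntegral.integral_const_mul]
          _ = ∫ r in (0:ℝ)..t, ∫ σ in (0:ℝ)..s, N (s - σ) * (N (t - r) * B r σ) := by
              exact interval_swap (F := fun σ r => N (s - σ) * (N (t - r) * B r σ))
                ((cN.comp (continuous_const.sub continuous_fst)).mul
                  ((cN.comp (continuous_const.sub continuous_snd)).mul
                    (cB.comp (continuous_snd.prodMk continuous_fst)))) 0 s 0 t
          _ = ∫ ξ in (0:ℝ)..t, N (t - ξ) * deriv (fun σ => H σ ξ) s := by
              refine intervalIntegral.integral_congr fun ξ _ => ?_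
              rw [stepB ξ s hs, ← intervalIntegral.integral_const_mul]
              exact intervalIntegral.integral_congr fun σ _ => by ring
end
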